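/- arXiv:1610.02623 — 5 statements merged into one kernel-verified Lean document; each statement's English description precedes it below -/
import Mathlib

section
/- Let V_w : ℝ → ℂ be differentiable everywhere with V_w ∈ L²(ℝ) and V_w′ ∈ L²(ℝ). Then the operator B defined by Bf(v) = ∫_ℝ (V_w(v − v′) − V_w(−v′))/v · f(v′) dv′ (for v ≠ 0) is a bounded linear operator on L²(ℝ); in fact ‖Bf‖²_{L²(ℝ)} ≤ 8(‖V_w‖²_{L²} + ‖V_w′‖²_{L²})·‖f‖²_{L²(ℝ)} for every f ∈ L²(ℝ). -/
open MeasureTheory Real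

/-- The singularity-free Wigner operator
`B f(v) = ∫ (V_w(v − v′) − V_w(−v′))/v · f(v′) dv′`. -/
noncomputable def Bop (Vw : ℝ → ℂ) (f : ℝ → ℂ) (v : ℝ) : ℂ :=
  ∫ v' : ℝ, (Vw (v - v') - Vw (-v')) / (v : ℂ) * f v'

/-!
Write `D(v) = ∫ (V(v - x) - V(-x)) f(x) dx`, so that `B f(v) = D(v) / v`. Cauchy–Schwarz and
translation invariance of Lebesgue measure give `|D(v)| ≤ 2 ‖V‖₂ ‖f‖₂`. By the fundamental theorem
of calculus and Fubini, `D(v) = ∫₀^v ∫ V'(s - x) f(x) dx ds`, whence `|D(v)| ≤ |v| ‖V'‖₂ ‖f‖₂`.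
Thus `|B f(v)|² ≤ ‖V'‖₂² ‖f‖₂²` everywhere and `|B f(v)|² ≤ 4 ‖V‖₂² ‖f‖₂² / v²`; integrating the
first bound over `|v| ≤ 1` and the second over `|v| > 1`, where `∫ v⁻² = 2`, gives
`‖B f‖₂² ≤ (2 ‖V'‖₂² + 8 ‖V‖₂²) ‖f‖₂²`.
-/

open Set Function
open scoped ENNReal

section L2

variable {α : Type*} [MeasurableSpace α] {μ : Measure α}

theorem integral_norm_mul_le_sqrt_mul_sqrt {E F : Type*} [NormedAddCommGroup E]
    [NormedAddCommGroup F] {g : α → E} {f : α → F} (hg : MemLp g 2 μ) (hf : MemLp f 2 μ) :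
    ∫ x, ‖g x‖ * ‖f x‖ ∂μ ≤ √(∫ x, ‖g x‖ ^ 2 ∂μ) * √(∫ x, ‖f x‖ ^ 2 ∂μ) := by
  have hg' : MemLp (fun x => ‖g x‖) (ENNReal.ofReal 2) μ := by simpa using hg.norm
  have hf' : MemLp (fun x => ‖f x‖) (ENNReal.ofReal 2) μ := by simpa using hf.norm
  simpa [sqrt_eq_rpow, rpow_two] using integral_mul_le_Lp_mul_Lq_of_nonneg
    HolderConjugate.two_two (ae_of_all _ fun x => norm_nonneg (g x))
    (ae_of_all _ fun x => norm_nonneg (f x)) hg' hf'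

theorem eLpNorm_two_sq_eq_lintegral {E : Type*} [NormedAddCommGroup E] (f : α → E) :
    eLpNorm f 2 μ ^ 2 = ∫⁻ x, ‖f x‖ₑ ^ 2 ∂μ := by
  simpa [ENNReal.rpow_two] using eLpNorm_nnreal_pow_eq_lintegral (f := f) (μ := μ) two_ne_zero

theorem MeasureTheory.MemLp.eLpNorm_two_sq_eq {E : Type*} [NormedAddCommGroup E] {f : α → E}
    (hf : MemLp f 2 μ) : eLpNorm f 2 μ ^ 2 = ENNReal.ofReal (∫ x, ‖f x‖ ^ 2 ∂μ) := by
  rw [eLpNorm_two_sq_eq_lintegral, ofReal_integral_eq_lintegral_ofReal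
    (hf.integrable_norm_pow two_ne_zero) (ae_of_all _ fun x => by positivity)]
  simp_rw [ENNReal.ofReal_pow (norm_nonneg _), ofReal_norm]

end L2

theorem enorm_sq_le_ofReal_sq {E : Type*} [NormedAddCommGroup E] {x : E} {a : ℝ}
    (h : ‖x‖ ≤ a) :
    ‖x‖ₑ ^ 2 ≤ ENNReal.ofReal (a ^ 2) := by
  rw [← ofReal_norm, ← ENNReal.ofReal_pow (norm_nonneg _)]
  exact ENNReal.ofReal_le_ofReal (pow_le_pow_left₀ (norm_nonneg _) h 2)

section Translation

variable {g f : ℝ → ℂ}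

theorem integrable_comp_sub_mul (hg : MemLp g 2) (hf : MemLp f 2) (s : ℝ) :
    Integrable (fun x => g (s - x) * f x) :=
  (hg.comp_measurePreserving (Measure.measurePreserving_sub_left volume s)).integrable_mul hf

theorem integral_norm_comp_sub_mul_le (hg : MemLp g 2) (hf : MemLp f 2) (s : ℝ) :
    ∫ x, ‖g (s - x)‖ * ‖f x‖ ≤ √(∫ x, ‖g x‖ ^ 2) * √(∫ x, ‖f x‖ ^ 2) := by
  have hgs : MemLp (fun x => g (s - x)) 2 :=
    hg.comp_measurePreserving (Measure.measurePreserving_sub_left volume s)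
  simpa only [integral_sub_left_eq_self (fun u => ‖g u‖ ^ 2)] using
    integral_norm_mul_le_sqrt_mul_sqrt hgs hf

theorem norm_integral_comp_sub_mul_le (hg : MemLp g 2) (hf : MemLp f 2) (s : ℝ) :
    ‖∫ x, g (s - x) * f x‖ ≤ √(∫ x, ‖g x‖ ^ 2) * √(∫ x, ‖f x‖ ^ 2) :=
  (norm_integral_le_integral_norm _).trans <| by
    simpa only [norm_mul] using integral_norm_comp_sub_mul_le hg hf s

theorem integrable_uncurry_comp_sub_mul {μ : Measure ℝ} [IsFiniteMeasure μ]
    (hg : MemLp g 2) (hf : MemLp f 2) :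
    Integrable (uncurry fun s x => g (s - x) * f x) (μ.prod volume) := by
  have hsub :
      Measure.QuasiMeasurePreserving (fun p : ℝ × ℝ => p.1 - p.2) (μ.prod volume) volume :=
    QuasiMeasurePreserving.prod_of_right measurable_sub <| ae_of_all _ fun s =>
      (Measure.measurePreserving_sub_left volume s).quasiMeasurePreserving
  have hm : AEStronglyMeasurable (uncurry fun s x => g (s - x) * f x) (μ.prod volume) :=
    (hg.1.comp_quasiMeasurePreserving hsub).mul hf.1.comp_snd
  refine (integrable_prod_iff hm).2 ⟨ae_of_all _ fun s => ?_, ?_⟩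
  · exact integrable_comp_sub_mul hg hf s
  · refine (integrable_const (√(∫ x, ‖g x‖ ^ 2) * √(∫ x, ‖f x‖ ^ 2))).mono'
      hm.norm.integral_prod_right' (ae_of_all _ fun s => ?_)
    rw [norm_of_nonneg (integral_nonneg fun _ => norm_nonneg _)]
    simpa only [uncurry_apply_pair, norm_mul] using integral_norm_comp_sub_mul_le hg hf s

end Translation

theorem sub_eq_intervalIntegral_comp_sub {E : Type*} [NormedAddCommGroup E] [NormedSpace ℝ E]
    [CompleteSpace E] {V V' : ℝ → E} (hderiv : ∀ u, HasDerivAt V (V' u) u)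
    (hV' : LocallyIntegrable V') (v x : ℝ) :
    V (v - x) - V (-x) = ∫ s in 0..v, V' (s - x) := by
  rw [intervalIntegral.integral_comp_sub_right, intervalIntegral.integral_eq_sub_of_hasDerivAt
    (fun u _ => hderiv u) (hV'.integrableOn_isCompact isCompact_uIcc).intervalIntegrable,
    zero_sub]

section Wigner

variable {V V' f : ℝ → ℂ}

theorem norm_integral_sub_mul_le_two_mul (hV : MemLp V 2) (hf : MemLp f 2) (v : ℝ) :
    ‖∫ x, (V (v - x) - V (-x)) * f x‖ ≤ 2 * (√(∫ x, ‖V x‖ ^ 2) * √(∫ x, ‖f x‖ ^ 2)) := by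
  have h0 := norm_integral_comp_sub_mul_le hV hf 0
  have h1 := integrable_comp_sub_mul hV hf 0
  simp only [zero_sub] at h0 h1
  simp_rw [sub_mul]
  rw [integral_sub (integrable_comp_sub_mul hV hf v) h1, two_mul]
  exact (norm_sub_le _ _).trans (add_le_add (norm_integral_comp_sub_mul_le hV hf v) h0)

theorem integral_sub_mul_eq_intervalIntegral (hderiv : ∀ u, HasDerivAt V (V' u) u)
    (hV' : MemLp V' 2) (hf : MemLp f 2) (v : ℝ) :
    ∫ x, (V (v - x) - V (-x)) * f x = ∫ s in 0..v, ∫ x, V' (s - x) * f x := by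
  have : IsFiniteMeasure (volume.restrict (uIoc 0 v)) :=
    isFiniteMeasure_restrict.2 (by simp [uIoc])
  simp_rw [sub_eq_intervalIntegral_comp_sub hderiv (hV'.locallyIntegrable one_le_two) v,
    ← intervalIntegral.integral_mul_const]
  exact (intervalIntegral_integral_swap (integrable_uncurry_comp_sub_mul hV' hf)).symm

theorem norm_integral_sub_mul_le_abs_mul (hderiv : ∀ u, HasDerivAt V (V' u) u)
    (hV' : MemLp V' 2) (hf : MemLp f 2) (v : ℝ) :
    ‖∫ x, (V (v - x) - V (-x)) * f x‖ ≤ |v| * (√(∫ x, ‖V' x‖ ^ 2) * √(∫ x, ‖f x‖ ^ 2)) := by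
  rw [integral_sub_mul_eq_intervalIntegral hderiv hV' hf v]
  refine (intervalIntegral.norm_integral_le_of_norm_le_const fun s _ =>
    norm_integral_comp_sub_mul_le hV' hf s).trans_eq ?_
  rw [sub_zero, mul_comm]

theorem norm_Bop (v : ℝ) :
    ‖Bop V f v‖ = ‖∫ x, (V (v - x) - V (-x)) * f x‖ / |v| := by
  simp_rw [Bop, div_mul_eq_mul_div, integral_div, norm_div, Complex.norm_real, norm_eq_abs]

theorem norm_Bop_le (hderiv : ∀ u, HasDerivAt V (V' u) u) (hV' : MemLp V' 2) (hf : MemLp f 2)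
    (v : ℝ) : ‖Bop V f v‖ ≤ √(∫ x, ‖V' x‖ ^ 2) * √(∫ x, ‖f x‖ ^ 2) := by
  rcases eq_or_ne v 0 with rfl | hv
  · rw [norm_Bop, abs_zero, div_zero]
    positivity
  · rw [norm_Bop, div_le_iff₀ (abs_pos.2 hv), mul_comm]
    exact norm_integral_sub_mul_le_abs_mul hderiv hV' hf v

theorem norm_Bop_le_div_abs (hV : MemLp V 2) (hf : MemLp f 2) (v : ℝ) :
    ‖Bop V f v‖ ≤ 2 * (√(∫ x, ‖V x‖ ^ 2) * √(∫ x, ‖f x‖ ^ 2)) / |v| := by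
  rw [norm_Bop]
  gcongr
  exact norm_integral_sub_mul_le_two_mul hV hf v

end Wigner

theorem lintegral_Ioi_one_inv_sq : ∫⁻ v in Ioi (1 : ℝ), ENNReal.ofReal (v ^ 2)⁻¹ = 1 := by
  have h : EqOn (fun v : ℝ => v ^ (-2 : ℝ)) (fun v => (v ^ 2)⁻¹) (Ioi 1) := fun v hv => by
    simp [rpow_neg (zero_le_one.trans (le_of_lt hv))]
  rw [← setLIntegral_congr_fun measurableSet_Ioi (fun v hv => congrArg ENNReal.ofReal (h hv)),
    ← ofReal_integral_eq_lintegral_ofReal (integrableOn_Ioi_rpow_of_lt (by norm_num) one_pos),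
    integral_Ioi_rpow_of_lt (by norm_num) one_pos]
  · norm_num
  · filter_upwards [ae_restrict_mem measurableSet_Ioi] with v hv
    exact rpow_nonneg (zero_le_one.trans (le_of_lt hv)) _

theorem lintegral_one_lt_abs_inv_sq :
    ∫⁻ v in {v : ℝ | 1 < |v|}, ENNReal.ofReal (v ^ 2)⁻¹ = 2 := by
  have hneg : ∫⁻ v in Iio (-1 : ℝ), ENNReal.ofReal (v ^ 2)⁻¹ = 1 := by
    rw [← lintegral_Ioi_one_inv_sq, ← (Measure.measurePreserving_neg volume)
      |>.setLIntegral_comp_preimage_emb (Homeomorph.neg ℝ).measurableEmbedding]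
    simp
  have hsplit : {v : ℝ | 1 < |v|} = Iio (-1) ∪ Ioi 1 := by
    ext v; simp [lt_abs, lt_neg, or_comm]
  have hdisj : Disjoint (Iio (-1 : ℝ)) (Ioi 1) :=
    (Iic_disjoint_Ioi (by norm_num)).mono_left Iio_subset_Iic_self
  rw [hsplit, lintegral_union measurableSet_Ioi hdisj, hneg, lintegral_Ioi_one_inv_sq,
    one_add_one_eq_two]

theorem lintegral_le_two_mul_add_two_mul {g : ℝ → ℝ≥0∞} {A B : ℝ≥0∞}
    (hA : ∀ v, |v| ≤ 1 → g v ≤ A) (hB : ∀ v, 1 < |v| → g v ≤ B * ENNReal.ofReal (v ^ 2)⁻¹) :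
    ∫⁻ v, g v ≤ 2 * A + 2 * B := by
  have hT : MeasurableSet {v : ℝ | 1 < |v|} := measurableSet_lt measurable_const measurable_abs
  have hS : {v : ℝ | 1 < |v|}ᶜ = Icc (-1) 1 := by
    ext v; simp [abs_le]
  rw [← lintegral_add_compl g hT, hS, add_comm]
  gcongr
  · calc ∫⁻ v in Icc (-1 : ℝ) 1, g v ≤ ∫⁻ _ in Icc (-1 : ℝ) 1, A :=
          setLIntegral_mono' measurableSet_Icc fun v hv => hA v (abs_le.2 hv)
      _ = 2 * A := by rw [setLIntegral_const, Real.volume_Icc, mul_comm]; norm_num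
  · calc ∫⁻ v in {v : ℝ | 1 < |v|}, g v
          ≤ ∫⁻ v in {v : ℝ | 1 < |v|}, B * ENNReal.ofReal (v ^ 2)⁻¹ :=
          setLIntegral_mono' hT hB
      _ = 2 * B := by
          rw [lintegral_const_mul _ (by fun_prop), lintegral_one_lt_abs_inv_sq, mul_comm]

/-- If `V_w` is everywhere differentiable with
`V_w, V_w′ ∈ L²(ℝ)` (i.e. `V_w ∈ H¹(ℝ)`), then the singularity-free operator
`B` is bounded on `L²(ℝ)`:
`‖Bf‖₂² ≤ 8 (‖V_w‖₂² + ‖V_w′‖₂²) ‖f‖₂²` for every `f ∈ L²(ℝ)`. -/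
theorem stmt1 (Vw Vw' : ℝ → ℂ)
    (hderiv : ∀ u : ℝ, HasDerivAt Vw (Vw' u) u)
    (hVw : MemLp Vw 2 (volume : Measure ℝ))
    (hVw' : MemLp Vw' 2 (volume : Measure ℝ))
    (f : ℝ → ℂ) (hf : MemLp f 2 (volume : Measure ℝ)) :
    eLpNorm (Bop Vw f) 2 (volume : Measure ℝ) ^ 2 ≤
      ENNReal.ofReal (8 * ((∫ u : ℝ, ‖Vw u‖ ^ 2) + ∫ u : ℝ, ‖Vw' u‖ ^ 2)) *
        eLpNorm f 2 (volume : Measure ℝ) ^ 2 := by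
  have hK : 0 ≤ ∫ u, ‖Vw u‖ ^ 2 := integral_nonneg fun _ => by positivity
  have hK' : 0 ≤ ∫ u, ‖Vw' u‖ ^ 2 := integral_nonneg fun _ => by positivity
  have hF : 0 ≤ ∫ u, ‖f u‖ ^ 2 := integral_nonneg fun _ => by positivity
  have hnear (v : ℝ) (_ : |v| ≤ 1) : ‖Bop Vw f v‖ₑ ^ 2 ≤
      ENNReal.ofReal ((∫ u, ‖Vw' u‖ ^ 2) * ∫ u, ‖f u‖ ^ 2) := by
    simpa only [mul_pow, sq_sqrt hK', sq_sqrt hF] using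
      enorm_sq_le_ofReal_sq (norm_Bop_le hderiv hVw' hf v)
  have hfar (v : ℝ) (_ : 1 < |v|) : ‖Bop Vw f v‖ₑ ^ 2 ≤
      ENNReal.ofReal (4 * ((∫ u, ‖Vw u‖ ^ 2) * ∫ u, ‖f u‖ ^ 2)) * ENNReal.ofReal (v ^ 2)⁻¹ := by
    rw [← ENNReal.ofReal_mul (by positivity)]
    convert enorm_sq_le_ofReal_sq (norm_Bop_le_div_abs hVw hf v) using 2
    rw [div_pow, mul_pow, mul_pow, sq_sqrt hK, sq_sqrt hF, sq_abs]
    ring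
  rw [eLpNorm_two_sq_eq_lintegral, hf.eLpNorm_two_sq_eq]
  refine (lintegral_le_two_mul_add_two_mul hnear hfar).trans ?_
  rw [← ENNReal.ofReal_mul (by positivity), ← ENNReal.ofReal_ofNat 2,
    ← ENNReal.ofReal_mul zero_le_two, ← ENNReal.ofReal_mul zero_le_two,
    ← ENNReal.ofReal_add (by positivity) (by positivity)]
  exact ENNReal.ofReal_le_ofReal (by nlinarith)
end

section
/- Let V_w ∈ L²(ℝ) and define Bf(v) = ∫_ℝ (V_w(v − v′) − V_w(−v′))/v · f(v′) dv′ for v ≠ 0. Then for every f ∈ L²(ℝ), the high-velocity part satisfies ∫_{|v|>1} |Bf(v)|² dv ≤ 8 ‖V_w‖²_{L²(ℝ)} ‖f‖²_{L²(ℝ)}. -/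
/-!
For `v ≠ 0`, `B f(v)` is `1/v` times the pairing of `f` with `w ↦ V_w(v - w) - V_w(-w)`.
Translation and reflection preserve the `L²` norm, so this kernel row has `L²` norm at most
`2 ‖V_w‖₂`, and Cauchy–Schwarz gives `|B f(v)| ≤ 2 ‖V_w‖₂ ‖f‖₂ / |v|`. Squaring and integrating
over `|v| > 1`, where `∫ v⁻² dv = 2`, yields the constant `8`.
-/

open MeasureTheory Real

open Set

open scoped ENNReal

theorem MeasureTheory.MemLp.ofReal_integral_norm_sq {α E : Type*} [MeasurableSpace α]
    {μ : Measure α} [NormedAddCommGroup E] {g : α → E} (hg : MemLp g 2 μ) :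
    ENNReal.ofReal (∫ x, ‖g x‖ ^ 2 ∂μ) = eLpNorm g 2 μ ^ 2 := by
  have h := eLpNorm_nnreal_pow_eq_lintegral (f := g) (μ := μ) (p := 2) two_ne_zero
  simp only [NNReal.coe_ofNat, ENNReal.coe_ofNat, ENNReal.rpow_two] at h
  rw [h, ofReal_integral_eq_lintegral_ofReal (hg.integrable_norm_pow two_ne_zero)
    (ae_of_all _ fun x => by positivity)]
  simp_rw [← ofReal_norm, ENNReal.ofReal_pow (norm_nonneg _)]

theorem enorm_integral_mul_le_eLpNorm_two_mul_eLpNorm_two {α 𝕜 : Type*} [MeasurableSpace α]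
    {μ : Measure α} [NormedRing 𝕜] [NormedSpace ℝ 𝕜] {φ f : α → 𝕜}
    (hφ : AEStronglyMeasurable φ μ) (hf : AEStronglyMeasurable f μ) :
    ‖∫ x, φ x * f x ∂μ‖ₑ ≤ eLpNorm φ 2 μ * eLpNorm f 2 μ :=
  calc ‖∫ x, φ x * f x ∂μ‖ₑ ≤ eLpNorm (φ • f) 1 μ := by
        rw [eLpNorm_one_eq_lintegral_enorm]; exact enorm_integral_le_lintegral_enorm _
    _ ≤ eLpNorm φ 2 μ * eLpNorm f 2 μ := eLpNorm_smul_le_mul_eLpNorm hf hφ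

theorem eLpNorm_comp_sub_sub_comp_neg_le {G E : Type*} [MeasurableSpace G] [AddGroup G]
    [MeasurableAdd G] [MeasurableNeg G] {μ : Measure G} [μ.IsAddLeftInvariant] [μ.IsNegInvariant]
    [NormedAddCommGroup E] {p : ℝ≥0∞} (hp : 1 ≤ p) {V : G → E} (hV : AEStronglyMeasurable V μ)
    (v : G) : eLpNorm (fun w => V (v - w) - V (-w)) p μ ≤ 2 * eLpNorm V p μ := by
  have hsub := Measure.measurePreserving_sub_left μ v
  have hneg := Measure.measurePreserving_neg μ
  calc eLpNorm (fun w => V (v - w) - V (-w)) p μ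
      ≤ eLpNorm (V ∘ (v - ·)) p μ + eLpNorm (V ∘ Neg.neg) p μ :=
        eLpNorm_sub_le (hV.comp_measurePreserving hsub) (hV.comp_measurePreserving hneg) hp
    _ = 2 * eLpNorm V p μ := by
        rw [eLpNorm_comp_measurePreserving hV hsub, eLpNorm_comp_measurePreserving hV hneg, two_mul]

theorem enorm_Bop_le {Vw f : ℝ → ℂ} (hVw : AEStronglyMeasurable Vw) (hf : AEStronglyMeasurable f)
    (v : ℝ) : ‖Bop Vw f v‖ₑ ≤ ‖v‖ₑ⁻¹ * (2 * eLpNorm Vw 2 volume * eLpNorm f 2 volume) := by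
  rcases eq_or_ne v 0 with rfl | hv
  · simp [Bop]
  have hB : Bop Vw f v = (v : ℂ)⁻¹ * ∫ w, (Vw (v - w) - Vw (-w)) * f w := by
    simp only [Bop, div_eq_inv_mul, mul_assoc, integral_const_mul]
  have hrow : AEStronglyMeasurable (fun w => Vw (v - w) - Vw (-w)) :=
    (hVw.comp_measurePreserving (Measure.measurePreserving_sub_left volume v)).sub
      (hVw.comp_measurePreserving (Measure.measurePreserving_neg volume))
  rw [hB, enorm_mul, enorm_inv (by exact_mod_cast hv), enorm_eq_nnnorm, Complex.nnnorm_real,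
    ← enorm_eq_nnnorm]
  gcongr
  calc ‖∫ w, (Vw (v - w) - Vw (-w)) * f w‖ₑ
      ≤ eLpNorm (fun w => Vw (v - w) - Vw (-w)) 2 volume * eLpNorm f 2 volume :=
        enorm_integral_mul_le_eLpNorm_two_mul_eLpNorm_two hrow hf
    _ ≤ 2 * eLpNorm Vw 2 volume * eLpNorm f 2 volume := by
        gcongr; exact eLpNorm_comp_sub_sub_comp_neg_le one_le_two hVw v

theorem lintegral_Ioi_one_inv_enorm_sq : ∫⁻ v in Ioi (1 : ℝ), ‖v‖ₑ⁻¹ ^ 2 = 1 := by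
  have hrpow : ∀ v ∈ Ioi (1 : ℝ), ‖v‖ₑ⁻¹ ^ 2 = ENNReal.ofReal (v ^ (-2 : ℝ)) := fun v hv => by
    have hv0 : 0 < v := one_pos.trans hv
    rw [Real.enorm_eq_ofReal hv0.le, ← ENNReal.ofReal_inv_of_pos hv0,
      ← ENNReal.ofReal_pow (by positivity), rpow_neg hv0.le, inv_pow, rpow_two]
  rw [setLIntegral_congr_fun measurableSet_Ioi hrpow,
    ← ofReal_integral_eq_lintegral_ofReal (integrableOn_Ioi_rpow_of_lt (by norm_num) one_pos)
      (ae_restrict_of_forall_mem measurableSet_Ioi fun v hv => (rpow_pos_of_pos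
        (one_pos.trans hv) _).le),
    integral_Ioi_rpow_of_lt (by norm_num) one_pos]
  norm_num

theorem lintegral_one_lt_abs_inv_enorm_sq : ∫⁻ v in {v : ℝ | 1 < |v|}, ‖v‖ₑ⁻¹ ^ 2 = 2 := by
  have hsplit : {v : ℝ | 1 < |v|} = Neg.neg ⁻¹' Ioi 1 ∪ Ioi 1 := by
    ext v; simp [lt_abs, lt_neg, or_comm]
  have hdisj : Disjoint (Neg.neg ⁻¹' Ioi (1 : ℝ)) (Ioi 1) :=
    Set.disjoint_left.2 fun v hneg hpos => by
      simp only [mem_preimage, mem_Ioi] at hneg hpos; linarith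
  have hreflect : ∫⁻ v in Neg.neg ⁻¹' Ioi (1 : ℝ), ‖v‖ₑ⁻¹ ^ 2 =
      ∫⁻ v in Ioi (1 : ℝ), ‖v‖ₑ⁻¹ ^ 2 := by
    simpa only [enorm_neg] using
      (Measure.measurePreserving_neg (volume : Measure ℝ)).setLIntegral_comp_preimage
        measurableSet_Ioi (f := fun v => ‖v‖ₑ⁻¹ ^ 2) (by fun_prop)
  rw [hsplit, lintegral_union measurableSet_Ioi hdisj, hreflect, lintegral_Ioi_one_inv_enorm_sq,
    one_add_one_eq_two]

/-- For `V_w ∈ L²(ℝ)` and every `f ∈ L²(ℝ)`, the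
high-velocity part of the singularity-free operator satisfies
`∫_{|v|>1} |Bf(v)|² dv ≤ 8 ‖V_w‖₂² ‖f‖₂²`. -/
theorem stmt2 (Vw : ℝ → ℂ) (hVw : MemLp Vw 2 (volume : Measure ℝ))
    (f : ℝ → ℂ) (hf : MemLp f 2 (volume : Measure ℝ)) :
    ∫⁻ v in {v : ℝ | 1 < |v|}, (‖Bop Vw f v‖₊ : ENNReal) ^ 2 ≤
      ENNReal.ofReal (8 * (∫ u : ℝ, ‖Vw u‖ ^ 2) * ∫ u : ℝ, ‖f u‖ ^ 2) := by
  set C := 2 * eLpNorm Vw 2 volume * eLpNorm f 2 volume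
  have hpointwise : ∀ v : ℝ, ‖Bop Vw f v‖ₑ ^ 2 ≤ ‖v‖ₑ⁻¹ ^ 2 * C ^ 2 := fun v => by
    rw [← mul_pow]; exact pow_le_pow_left₀ zero_le (enorm_Bop_le hVw.1 hf.1 v) 2
  calc ∫⁻ v in {v : ℝ | 1 < |v|}, ‖Bop Vw f v‖ₑ ^ 2
      ≤ ∫⁻ v in {v : ℝ | 1 < |v|}, ‖v‖ₑ⁻¹ ^ 2 * C ^ 2 := lintegral_mono hpointwise
    _ = 2 * C ^ 2 := by
        rw [lintegral_mul_const _ (by fun_prop), lintegral_one_lt_abs_inv_enorm_sq]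
    _ = ENNReal.ofReal (8 * (∫ u : ℝ, ‖Vw u‖ ^ 2) * ∫ u : ℝ, ‖f u‖ ^ 2) := by
        rw [ENNReal.ofReal_mul (by positivity), ENNReal.ofReal_mul (by norm_num),
          hVw.ofReal_integral_norm_sq, hf.ofReal_integral_norm_sq, ENNReal.ofReal_ofNat]
        ring
end

section
/- Let V : ℝ → ℝ be essentially bounded, fix x ∈ ℝ and h > 0, and set R^h = 1/(2h), v_n = (2n+1)πh for n ∈ ℤ. Define the infinite matrix M by M_{nm} = (i/2π)∫_{−R^h}^{R^h} D_V(y) e^{i(v_n − v_m)y} dy and the discrete operator Θ_d on ℓ²(ℤ) by (Θ_d g)_n = 2πh·Σ_{m∈ℤ} M_{nm} g_m. Then Θ_d is a bounded linear operator on ℓ²(ℤ) with ‖Θ_d g‖_{ℓ²(ℤ)} ≤ 2‖V‖_∞ ‖g‖_{ℓ²(ℤ)} for all g ∈ ℓ²(ℤ), uniformly in h. -/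
open MeasureTheory Real

/-- Velocity grid point `v_n = (2n+1)πh`. -/
noncomputable def vpt (h : ℝ) (n : ℤ) : ℝ := (2 * (n : ℝ) + 1) * π * h

/-- The matrix entry
`M_{nm} = (i/2π) ∫_{−Rʰ}^{Rʰ} D_V(y) e^{i(v_n−v_m)y} dy` with `Rʰ = 1/(2h)`. -/
noncomputable def Mmat (V : ℝ → ℝ) (x h : ℝ) (n m : ℤ) : ℂ :=
  Complex.I / (2 * π) *
    ∫ y in Set.Icc (-(1 / (2 * h))) (1 / (2 * h)),
      ((V (x + y / 2) - V (x - y / 2) : ℝ) : ℂ) *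
        Complex.exp (Complex.I * ((vpt h n - vpt h m : ℝ) : ℂ) * (y : ℂ))

/-- The discrete pseudo-differential operator
`(Θ_d g)_n = 2πh Σ_m M_{nm} g_m` on `ℓ²(ℤ)`. -/
noncomputable def Θd (V : ℝ → ℝ) (x h : ℝ) (g : ℤ → ℂ) (n : ℤ) : ℂ :=
  (2 * π * h : ℝ) * ∑' m : ℤ, Mmat V x h n m * g m

/-!
Since `v_n - v_m = 2πh (n - m)`, after the reflection `y ↦ -y` the number `2πh M_{nm}` is the
`(n - m)`-th Fourier coefficient of the `1/h`-periodic extension `F` of `y ↦ i D_V(-y)` from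
`(-Rʰ, Rʰ]`. Hence `Θ_d` is the Laurent operator `g ↦ F̂ ∗ g`, which the Fourier isometry
`L²(ℝ/(1/h)ℤ) ≃ ℓ²(ℤ)` conjugates to multiplication by `F`; its norm is at most
`‖F‖_∞ ≤ 2‖V‖_∞`, whatever `h` is.
-/

open scoped ComplexConjugate

open AddCircle

theorem AddCircle.quasiMeasurePreserving_coe_equivIoc {T : ℝ} [Fact (0 < T)] (a : ℝ) :
    Measure.QuasiMeasurePreserving (fun t => (equivIoc T a t : ℝ)) haarAddCircle
      (volume.restrict (Set.Ioc a (a + T))) :=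
  ((measurePreserving_subtype_coe measurableSet_Ioc).comp
    (measurePreserving_equivIoc T)).quasiMeasurePreserving.mono_left
    (Measure.absolutelyContinuous_smul (by simp [(Fact.out : 0 < T)]))

theorem quasiMeasurePreserving_const_add_mul (b : ℝ) {c : ℝ} (hc : c ≠ 0) :
    Measure.QuasiMeasurePreserving (fun y : ℝ => b + c * y) volume volume :=
  (quasiMeasurePreserving_add_left volume b).comp (Measure.quasiMeasurePreserving_smul volume hc)

theorem lp.sqrt_tsum_norm_sq_eq_norm {ι : Type*} {E : ι → Type*} [∀ i, NormedAddCommGroup (E i)]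
    (f : lp E 2) : √(∑' i, ‖f i‖ ^ 2) = ‖f‖ := by
  rw [lp.norm_eq_tsum_rpow (by norm_num), Real.sqrt_eq_rpow]
  norm_num

section Laurent

variable {T : ℝ} [Fact (0 < T)]

theorem hasSum_fourierCoeff_mul {F : AddCircle T → ℂ} (hF : MemLp F 2 haarAddCircle)
    (G : Lp ℂ 2 (haarAddCircle : Measure (AddCircle T))) (n : ℤ) :
    HasSum (fun m => fourierCoeff F (n - m) * fourierCoeff G m)
      (fourierCoeff (fun t => F t * G t) n) := by
  -- Parseval's identity for `⟪w, G⟫` in the Fourier basis.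
  set w : AddCircle T → ℂ := fun t => conj (fourier (-n) t * F t)
  have hw : MemLp w 2 haarAddCircle := by
    refine hF.of_le (Complex.continuous_conj.comp_aestronglyMeasurable
      ((map_continuous _).aestronglyMeasurable.mul hF.1)) (ae_of_all _ fun t => ?_)
    simp [w, Circle.norm_coe]
  have hinner (f : AddCircle T → ℂ) (g : Lp ℂ 2 (haarAddCircle : Measure (AddCircle T)))
      (hfg : (g : AddCircle T → ℂ) =ᵐ[haarAddCircle] f) :
      inner ℂ (hw.toLp w) g = ∫ t, fourier (-n) t * F t * f t ∂haarAddCircle := by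
    rw [L2.inner_def]
    refine integral_congr_ae ?_
    filter_upwards [hw.coeFn_toLp, hfg] with t hwt hgt
    rw [RCLike.inner_apply, hwt, hgt, Complex.conj_conj, mul_comm]
  have hcoeff (m : ℤ) : inner ℂ (hw.toLp w) (fourierBasis m) * inner ℂ (fourierBasis m) G =
      fourierCoeff F (n - m) * fourierCoeff G m := by
    rw [← fourierBasis.repr_apply_apply, fourierBasis_repr, coe_fourierBasis,
      hinner _ _ (coeFn_fourierLp 2 m), fourierCoeff]
    congr 1
    refine integral_congr_ae (ae_of_all _ fun t => ?_)
    simp only [smul_eq_mul, sub_eq_add_neg, neg_add, neg_neg]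
    rw [fourier_add]
    ring
  have htotal : inner ℂ (hw.toLp w) G = fourierCoeff (fun t => F t * G t) n := by
    simp only [hinner _ _ (ae_eq_refl _), fourierCoeff, smul_eq_mul, mul_assoc]
  simpa only [hcoeff, htotal] using fourierBasis.hasSum_inner_mul_inner (hw.toLp w) G

/-- The Laurent (bi-infinite Toeplitz) operator with symbol `F`. -/
noncomputable def laurentOp (F : AddCircle T → ℂ) (g : ℤ → ℂ) (n : ℤ) : ℂ :=
  ∑' m, fourierCoeff F (n - m) * g m

theorem exists_lp_eq_laurentOp_norm_le {F : AddCircle T → ℂ}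
    (hF : AEStronglyMeasurable F haarAddCircle) {C : ℝ} (hC : ∀ᵐ t ∂haarAddCircle, ‖F t‖ ≤ C)
    (g : lp (fun _ : ℤ => ℂ) 2) :
    ∃ u : lp (fun _ : ℤ => ℂ) 2, ⇑u = laurentOp F g ∧ ‖u‖ ≤ C * ‖g‖ := by
  set G := (fourierBasis (T := T)).repr.symm g
  have hG : fourierCoeff G = g := by
    ext m
    rw [← fourierBasis_repr, LinearIsometryEquiv.apply_symm_apply]
  have hFG : ∀ᵐ t ∂haarAddCircle, ‖F t * G t‖ ≤ C * ‖G t‖ := by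
    filter_upwards [hC] with t ht
    rw [norm_mul]
    exact mul_le_mul_of_nonneg_right ht (norm_nonneg _)
  have hP : MemLp (fun t => F t * G t) 2 haarAddCircle :=
    (Lp.memLp G).of_le_mul (hF.mul (Lp.aestronglyMeasurable G)) hFG
  refine ⟨fourierBasis.repr (hP.toLp _), funext fun n => ?_, ?_⟩
  · rw [fourierBasis_repr, fourierCoeff_congr_ae hP.coeFn_toLp, laurentOp, ← hG,
      (hasSum_fourierCoeff_mul (MemLp.of_bound hF C hC) G n).tsum_eq]
  · rw [LinearIsometryEquiv.norm_map, ← (fourierBasis (T := T)).repr.symm.norm_map g]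
    refine Lp.norm_le_mul_norm_of_ae_le_mul ?_
    filter_upwards [hP.coeFn_toLp, hFG] with t hPt ht
    rwa [hPt]

end Laurent

section Symbol

variable (V : ℝ → ℝ) (x h : ℝ) [Fact (0 < 1 / h)]

/-- The `1/h`-periodic extension of `y ↦ i D_V(-y)` from `(-Rʰ, Rʰ]`. -/
noncomputable def diffSymbol : AddCircle (1 / h) → ℂ :=
  AddCircle.liftIoc (1 / h) (-(1 / (2 * h)))
    fun y => Complex.I * ((V (x - y / 2) - V (x + y / 2) : ℝ) : ℂ)

theorem quasiMeasurePreserving_add_div_two :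
    Measure.QuasiMeasurePreserving (fun y : ℝ => x + y / 2) volume volume := by
  simpa only [div_eq_inv_mul] using quasiMeasurePreserving_const_add_mul x (c := 2⁻¹) (by norm_num)

theorem quasiMeasurePreserving_sub_div_two :
    Measure.QuasiMeasurePreserving (fun y : ℝ => x - y / 2) volume volume := by
  simpa only [sub_eq_add_neg, div_eq_inv_mul, ← neg_mul] using
    quasiMeasurePreserving_const_add_mul x (c := -2⁻¹) (by norm_num)

theorem aestronglyMeasurable_diffSymbol (hV : AEStronglyMeasurable V volume) :
    AEStronglyMeasurable (diffSymbol V x h) haarAddCircle := by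
  have hf : AEStronglyMeasurable
      (fun y : ℝ => Complex.I * ((V (x - y / 2) - V (x + y / 2) : ℝ) : ℂ)) volume :=
    (Complex.continuous_ofReal.comp_aestronglyMeasurable
      ((hV.comp_quasiMeasurePreserving (quasiMeasurePreserving_sub_div_two x)).sub
        (hV.comp_quasiMeasurePreserving (quasiMeasurePreserving_add_div_two x)))).const_mul _
  exact hf.restrict.comp_quasiMeasurePreserving
    (AddCircle.quasiMeasurePreserving_coe_equivIoc (T := 1 / h) (-(1 / (2 * h))))

theorem ae_norm_diffSymbol_le (hV : MemLp V ⊤ volume) :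
    ∀ᵐ t ∂haarAddCircle, ‖diffSymbol V x h t‖ ≤ 2 * (eLpNorm V ⊤ volume).toReal := by
  have hVC : ∀ᵐ t, ‖V t‖ ≤ (eLpNorm V ⊤ volume).toReal := by
    simpa only [toReal_eLpNorm hV.1] using ae_le_lpNorm_exponent_top hV
  have hf : ∀ᵐ y : ℝ, ‖Complex.I * ((V (x - y / 2) - V (x + y / 2) : ℝ) : ℂ)‖ ≤
      2 * (eLpNorm V ⊤ volume).toReal := by
    filter_upwards [(quasiMeasurePreserving_sub_div_two x).ae hVC,
      (quasiMeasurePreserving_add_div_two x).ae hVC] with y h₁ h₂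
    rw [norm_mul, Complex.norm_I, one_mul, Complex.norm_real, two_mul]
    exact (norm_sub_le _ _).trans (add_le_add h₁ h₂)
  exact ((AddCircle.quasiMeasurePreserving_coe_equivIoc (T := 1 / h) (-(1 / (2 * h)))).ae
    (ae_restrict_of_ae hf) :)

theorem ofReal_mul_Mmat_eq_fourierCoeff (n m : ℤ) :
    ((2 * π * h : ℝ) : ℂ) * Mmat V x h n m = fourierCoeff (diffSymbol V x h) (n - m) := by
  have hh : 0 < h := one_div_pos.mp Fact.out
  set R := 1 / (2 * h)
  have hR : -R + 1 / h = R := by simp only [R]; field_simp; ring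
  have hRR : -R ≤ R := by simp only [R]; linarith [show 0 < 1 / (2 * h) by positivity]
  rw [fourierCoeff_eq_intervalIntegral _ _ (-R), hR, Mmat, integral_Icc_eq_integral_Ioc,
    ← intervalIntegral.integral_of_le hRR]
  have hlift : ∫ y in -R..R, fourier (-(n - m)) (y : AddCircle (1 / h)) • diffSymbol V x h y =
      ∫ y in -R..R, fourier (-(n - m)) (y : AddCircle (1 / h)) •
        (Complex.I * ((V (x - y / 2) - V (x + y / 2) : ℝ) : ℂ)) := by
    refine intervalIntegral.integral_congr_ae (ae_of_all _ fun y hy => ?_)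
    have hy' : y ∈ Set.Ioc (-R) (-R + 1 / h) := by rwa [hR, ← Set.uIoc_of_le hRR]
    rw [diffSymbol, AddCircle.liftIoc_coe_apply hy']
  have hreflect := intervalIntegral.integral_comp_neg (a := -R) (b := R)
    fun y => fourier (-(n - m)) (y : AddCircle (1 / h)) •
        (Complex.I * ((V (x - y / 2) - V (x + y / 2) : ℝ) : ℂ))
  rw [neg_neg] at hreflect
  rw [hlift, ← hreflect, ← intervalIntegral.integral_const_mul,
    ← intervalIntegral.integral_const_mul, ← intervalIntegral.integral_smul]
  refine intervalIntegral.integral_congr fun y _ => ?_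
  simp only [fourier_coe_apply, vpt, smul_eq_mul, one_div_one_div, Complex.real_smul, neg_div,
    sub_neg_eq_add, ← sub_eq_add_neg]
  push_cast
  field_simp
  ring_nf

theorem Θd_eq_laurentOp (g : ℤ → ℂ) : Θd V x h g = laurentOp (diffSymbol V x h) g := by
  ext n
  simp only [Θd, laurentOp, ← tsum_mul_left, ← mul_assoc, ofReal_mul_Mmat_eq_fourierCoeff]

end Symbol

/-- For essentially bounded `V`, fixed `x` and `h > 0`, the
discrete operator `Θ_d` is bounded on `ℓ²(ℤ)` with
`‖Θ_d g‖_{ℓ²} ≤ 2 ‖V‖_∞ ‖g‖_{ℓ²}`, uniformly in `h`. -/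
theorem stmt8 (V : ℝ → ℝ) (hV : MemLp V ⊤ (volume : Measure ℝ))
    (x h : ℝ) (hh : 0 < h) (g : ℤ → ℂ) (hg : Memℓp g 2) :
    Memℓp (Θd V x h g) 2 ∧
      Real.sqrt (∑' n : ℤ, ‖Θd V x h g n‖ ^ 2) ≤
        2 * (eLpNorm V ⊤ (volume : Measure ℝ)).toReal *
          Real.sqrt (∑' m : ℤ, ‖g m‖ ^ 2) := by
  have : Fact (0 < 1 / h) := ⟨by positivity⟩
  obtain ⟨u, hu, hnorm⟩ := exists_lp_eq_laurentOp_norm_le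
    (aestronglyMeasurable_diffSymbol V x h hV.1) (ae_norm_diffSymbol_le V x h hV) ⟨g, hg⟩
  rw [Θd_eq_laurentOp, ← hu, lp.sqrt_tsum_norm_sq_eq_norm u]
  exact ⟨u.2, hnorm.trans_eq (congrArg _ (lp.sqrt_tsum_norm_sq_eq_norm ⟨g, hg⟩).symm)⟩
end

section
/- Let V : ℝ → ℝ be bounded measurable, fix x ∈ ℝ and h > 0, and set v_n = (2n+1)πh. For the discrete singularity-free operator (B_d g)_n = i h Σ_{m∈ℤ} g_m ∫_{−1/(2h)}^{1/(2h)} D_V(y)·(e^{i(v_n − v_m)y} − e^{−i v_m y})/v_n dy, one has for every g ∈ ℓ²(ℤ) and every n ∈ ℤ the pointwise bound |(B_d g)_n| ≤ (h·∫_{−1/(2h)}^{1/(2h)} y²|D_V(y)|² dy)^{1/2} · ‖g‖_{ℓ²(ℤ)}. -/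
/-!
Write the integrand as `e^{-i v_m y} K_n(y)` with `K_n(y) = D_V(y) (e^{i v_n y} - 1) / v_n`, so
that `|K_n(y)| ≤ |y| |D_V(y)|` by `|e^{iθ} - 1| ≤ |θ|`. Since `v_m = 2π h m + π h`, the `m`-th
integral is `1/h` times the `m`-th Fourier coefficient of `e^{-iπhy} K_n(y)` on the interval
`[-1/(2h), 1/(2h)]` of length `1/h`. Cauchy–Schwarz in `ℓ²(ℤ)` and Parseval then bound
`|(B_d g)_n|` by `‖g‖ (h ∫ |K_n|²)^{1/2}`.
-/

open MeasureTheory Real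

/-- The discrete singularity-free Wigner operator
`(B_d g)_n = i h Σ_m g_m ∫_{−1/(2h)}^{1/(2h)} D_V(y)
  (e^{i(v_n−v_m)y} − e^{−i v_m y})/v_n dy`. -/
noncomputable def Bd (V : ℝ → ℝ) (x h : ℝ) (g : ℤ → ℂ) (n : ℤ) : ℂ :=
  Complex.I * (h : ℂ) *
    ∑' m : ℤ, g m *
      ∫ y in Set.Icc (-(1 / (2 * h))) (1 / (2 * h)),
        ((V (x + y / 2) - V (x - y / 2) : ℝ) : ℂ) *
          (Complex.exp (Complex.I * ((vpt h n - vpt h m : ℝ) : ℂ) * (y : ℂ)) -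
            Complex.exp (-(Complex.I * ((vpt h m : ℝ) : ℂ) * (y : ℂ)))) /
          ((vpt h n : ℝ) : ℂ)

open Set Complex

theorem norm_tsum_mul_le_sqrt_mul_sqrt {ι R : Type*} [SeminormedRing R] {a b : ι → R}
    (ha : Summable fun i => ‖a i‖ ^ 2) (hb : Summable fun i => ‖b i‖ ^ 2) :
    ‖∑' i, a i * b i‖ ≤ √(∑' i, ‖a i‖ ^ 2) * √(∑' i, ‖b i‖ ^ 2) := by
  obtain ⟨hsum, hle⟩ := Real.summable_and_inner_le_Lp_mul_Lq_tsum_of_nonneg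
    Real.HolderConjugate.two_two (fun i => norm_nonneg (a i)) (fun i => norm_nonneg (b i))
    (by simpa only [Real.rpow_two] using ha) (by simpa only [Real.rpow_two] using hb)
  simp only [Real.rpow_two, ← Real.sqrt_eq_rpow] at hle
  calc ‖∑' i, a i * b i‖ ≤ ∑' i, ‖a i * b i‖ :=
        norm_tsum_le_tsum_norm (hsum.of_nonneg_of_le (fun _ => norm_nonneg _)
          fun i => norm_mul_le _ _)
    _ ≤ ∑' i, ‖a i‖ * ‖b i‖ :=
        Summable.tsum_le_tsum (fun i => norm_mul_le _ _)
          (hsum.of_nonneg_of_le (fun _ => norm_nonneg _) fun i => norm_mul_le _ _) hsum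
    _ ≤ _ := hle

theorem norm_tsum_mul_fourierCoeffOn_le {a b : ℝ} (hab : a < b) {f : ℝ → ℂ}
    (hf : MemLp f 2 (volume.restrict (Ioc a b))) {g : ℤ → ℂ}
    (hg : Summable fun m => ‖g m‖ ^ 2) :
    ‖∑' m, g m * fourierCoeffOn hab f m‖ ≤
      √(∑' m, ‖g m‖ ^ 2) * √((b - a)⁻¹ * ∫ x in a..b, ‖f x‖ ^ 2) := by
  have hP := hasSum_sq_fourierCoeffOn hab hf
  rw [smul_eq_mul] at hP
  rw [← hP.tsum_eq]
  exact norm_tsum_mul_le_sqrt_mul_sqrt hg hP.summable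

theorem setIntegral_Icc_fourier_neg_smul {a b : ℝ} (hab : a < b) (f : ℝ → ℂ) (n : ℤ) :
    ∫ x in Icc a b, fourier (-n) (x : AddCircle (b - a)) • f x =
      (b - a) • fourierCoeffOn hab f n := by
  rw [fourierCoeffOn_eq_integral, smul_smul, mul_one_div_cancel (sub_ne_zero.2 hab.ne'), one_smul,
    intervalIntegral.integral_of_le hab.le, integral_Icc_eq_integral_Ioc]

theorem fourier_neg_mul_exp_eq_exp_neg_vpt (h : ℝ) (m : ℤ) (y : ℝ) :
    fourier (-m) (y : AddCircle (1 / (2 * h) - -(1 / (2 * h)))) * exp (-(I * π * h * y)) =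
      exp (-(I * vpt h m * y)) := by
  rw [fourier_coe_apply, ← Complex.exp_add, vpt]
  congr 1
  push_cast
  field_simp
  ring

/-- The factor `e^{-iπhy}` turns `e^{-i v_m y}` into the `m`-th Fourier mode of period `1/h`. -/
noncomputable def bdKernel (D : ℝ → ℝ) (h : ℝ) (n : ℤ) (y : ℝ) : ℂ :=
  exp (-(I * π * h * y)) * ((D y : ℂ) * (exp (I * vpt h n * y) - 1) / vpt h n)

theorem norm_bdKernel_le (D : ℝ → ℝ) (h : ℝ) (n : ℤ) (y : ℝ) :
    ‖bdKernel D h n y‖ ≤ |y| * |D y| := by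
  have hexp : ‖exp (I * vpt h n * y) - 1‖ ≤ |vpt h n| * |y| := by
    simpa [← abs_mul, ← mul_assoc] using
      Real.norm_exp_I_mul_ofReal_sub_one_le (x := vpt h n * y)
  have hmod : ‖exp (-(I * π * h * y))‖ = 1 := by simp [Complex.norm_exp]
  rw [bdKernel, norm_mul, hmod, one_mul, norm_div, norm_mul, Complex.norm_real,
    Complex.norm_real, Real.norm_eq_abs, Real.norm_eq_abs]
  refine div_le_of_le_mul₀ (abs_nonneg _) (by positivity) ?_
  calc |D y| * ‖exp (I * vpt h n * y) - 1‖ ≤ |D y| * (|vpt h n| * |y|) := by gcongr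
    _ = |y| * |D y| * |vpt h n| := by ring

theorem Bd_integrand_eq_fourier_neg_smul_bdKernel (D : ℝ → ℝ) (h : ℝ) (n m : ℤ) (y : ℝ) :
    (D y : ℂ) * (exp (I * ((vpt h n - vpt h m : ℝ) : ℂ) * y) - exp (-(I * vpt h m * y))) /
        vpt h n =
      fourier (-m) (y : AddCircle (1 / (2 * h) - -(1 / (2 * h)))) • bdKernel D h n y := by
  rw [smul_eq_mul, bdKernel, ← mul_assoc, fourier_neg_mul_exp_eq_exp_neg_vpt]
  have hsplit : exp (I * ((vpt h n - vpt h m : ℝ) : ℂ) * y) =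
      exp (-(I * vpt h m * y)) * exp (I * vpt h n * y) := by
    rw [← Complex.exp_add]; congr 1; push_cast; ring
  rw [hsplit]
  ring

theorem Bd_eq_I_mul_tsum_fourierCoeffOn (V : ℝ → ℝ) (x h : ℝ) (g : ℤ → ℂ) (n : ℤ)
    (hab : -(1 / (2 * h)) < 1 / (2 * h)) :
    Bd V x h g n = I * ∑' m, g m *
      fourierCoeffOn hab (bdKernel (fun y => V (x + y / 2) - V (x - y / 2)) h n) m := by
  have hh : h ≠ 0 := by rintro rfl; simp at hab
  have hwidth : 1 / (2 * h) - -(1 / (2 * h)) = h⁻¹ := by field_simp; ring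
  have hint :=
    Bd_integrand_eq_fourier_neg_smul_bdKernel (fun y => V (x + y / 2) - V (x - y / 2)) h n
  simp only [Bd, hint, setIntegral_Icc_fourier_neg_smul hab]
  simp only [hwidth, real_smul, mul_left_comm (g _), tsum_mul_left]
  rw [mul_assoc, ← mul_assoc (h : ℂ), ofReal_inv, mul_inv_cancel₀ (ofReal_ne_zero.2 hh), one_mul]

theorem memLp_id_mul_restrict_Ioc {D : ℝ → ℝ} (hDm : Measurable D) {C : ℝ}
    (hDb : ∀ y, |D y| ≤ C) (a b : ℝ) :
    MemLp (fun y => y * D y) 2 (volume.restrict (Ioc a b)) := by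
  refine MemLp.of_bound (by fun_prop) (max |a| |b| * C) ?_
  filter_upwards [ae_restrict_mem measurableSet_Ioc] with y hy
  rw [Real.norm_eq_abs, abs_mul]
  exact mul_le_mul (abs_le_max_abs_abs hy.1.le hy.2) (hDb y) (abs_nonneg _) (by positivity)

theorem memLp_bdKernel {D : ℝ → ℝ} (hDm : Measurable D) {μ : Measure ℝ}
    (hD : MemLp (fun y => y * D y) 2 μ) (h : ℝ) (n : ℤ) :
    MemLp (bdKernel D h n) 2 μ :=
  hD.of_le (by unfold bdKernel; fun_prop) (ae_of_all _ fun y => by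
    simpa [abs_mul] using norm_bdKernel_le D h n y)

theorem intervalIntegral_norm_sq_bdKernel_le {D : ℝ → ℝ} {a b : ℝ} (hab : a ≤ b)
    (hD : MemLp (fun y => y * D y) 2 (volume.restrict (Ioc a b))) (h : ℝ) (n : ℤ) :
    ∫ y in a..b, ‖bdKernel D h n y‖ ^ 2 ≤ ∫ y in Icc a b, y ^ 2 * D y ^ 2 := by
  rw [intervalIntegral.integral_of_le hab, integral_Icc_eq_integral_Ioc]
  refine integral_mono_of_nonneg (ae_of_all _ fun y => by positivity)
    (by simpa only [mul_pow] using hD.integrable_sq) (ae_of_all _ fun y => ?_)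
  calc ‖bdKernel D h n y‖ ^ 2 ≤ (|y| * |D y|) ^ 2 := by
        gcongr; exact norm_bdKernel_le D h n y
    _ = y ^ 2 * D y ^ 2 := by rw [mul_pow, sq_abs, sq_abs]

/-- Pointwise low-velocity bound for the discrete
singularity-free operator:
`|(B_d g)_n| ≤ (h ∫_{−1/(2h)}^{1/(2h)} y²|D_V(y)|² dy)^{1/2} ‖g‖_{ℓ²}`. -/
theorem stmt11 (V : ℝ → ℝ) (hVm : Measurable V) (hVb : ∃ c : ℝ, ∀ t : ℝ, |V t| ≤ c)
    (x h : ℝ) (hh : 0 < h) (g : ℤ → ℂ) (hg : Memℓp g 2) (n : ℤ) :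
    ‖Bd V x h g n‖ ≤
      Real.sqrt (h * ∫ y in Set.Icc (-(1 / (2 * h))) (1 / (2 * h)),
          y ^ 2 * (V (x + y / 2) - V (x - y / 2)) ^ 2) *
        Real.sqrt (∑' m : ℤ, ‖g m‖ ^ 2) := by
  obtain ⟨C, hC⟩ := hVb
  set D : ℝ → ℝ := fun y => V (x + y / 2) - V (x - y / 2)
  have hab : -(1 / (2 * h)) < 1 / (2 * h) := neg_lt_self (by positivity)
  have hwidth : (1 / (2 * h) - -(1 / (2 * h)))⁻¹ = h := by field_simp; ring
  have hDb : ∀ y, |D y| ≤ C + C := fun y => (abs_sub _ _).trans (add_le_add (hC _) (hC _))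
  have hyD := memLp_id_mul_restrict_Ioc (by fun_prop) hDb (-(1 / (2 * h))) (1 / (2 * h))
  have hg2 : Summable fun m => ‖g m‖ ^ 2 := by simpa using hg.summable (by norm_num)
  rw [Bd_eq_I_mul_tsum_fourierCoeffOn V x h g n hab, norm_mul, norm_I, one_mul, mul_comm (√(h * _))]
  refine (norm_tsum_mul_fourierCoeffOn_le hab (memLp_bdKernel (by fun_prop) hyD h n)
    hg2).trans ?_
  rw [hwidth]
  gcongr
  exact intervalIntegral_norm_sq_bdKernel_le hab.le hyD h n
end

section
/- Let V : ℝ → ℝ be bounded measurable, fix x ∈ ℝ and h > 0, and set v_n = (2n+1)πh. For the discrete singularity-free operator (B_d g)_n = i h Σ_{m∈ℤ} g_m ∫_{−1/(2h)}^{1/(2h)} D_V(y)·(e^{i(v_n − v_m)y} − e^{−i v_m y})/v_n dy, the sum over the low-velocity indices satisfies, for every g ∈ ℓ²(ℤ): Σ_{n∈ℤ, |(2n+1)πh| ≤ 1} |(B_d g)_n|² ≤ (1/π + h)·(∫_{−1/(2h)}^{1/(2h)} y²|D_V(y)|² dy)·‖g‖²_{ℓ²(ℤ)}. -/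
open MeasureTheory Real

/-!
The functions `e_m(y) = √h e^{i v_m y}` are orthonormal in `L²[-1/(2h), 1/(2h)]`, since
`v_m - v_{m'} ∈ 2πhℤ` and the window has length `1/h`. Splitting
`e^{i(v_n - v_m)y} - e^{-i v_m y} = e^{-i v_m y}(e^{i v_n y} - 1)` gives
`(B_d g)_n = i Σ_m g_m ⟪e_m, F_n⟫` with `F_n(y) = √h D_V(y) (e^{i v_n y} - 1) / v_n`, and
`|e^{it} - 1| ≤ |t|` gives `‖F_n‖² ≤ h ∫ y² D_V(y)² dy`. As
`Σ_m g_m ⟪e_m, F_n⟫ = ⟪Σ_m conj(g_m) e_m, F_n⟫`, each entry satisfies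
`|(B_d g)_n|² ≤ h ‖g‖² ∫ y² D_V²`; there are at most `1/(πh) + 1` low-velocity indices `n`.
-/

open scoped InnerProductSpace ComplexConjugate

section Hilbert

variable {ι 𝕜 E : Type*} [RCLike 𝕜] [NormedAddCommGroup E] [InnerProductSpace 𝕜 E]

theorem Orthonormal.norm_sum_mul_inner_sq_le {v : ι → E} (hv : Orthonormal 𝕜 v) (c : ι → 𝕜)
    (s : Finset ι) (x : E) :
    ‖∑ i ∈ s, c i * ⟪v i, x⟫_𝕜‖ ^ 2 ≤ (∑ i ∈ s, ‖c i‖ ^ 2) * ‖x‖ ^ 2 := by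
  have hsum : ∑ i ∈ s, c i * ⟪v i, x⟫_𝕜 = ⟪∑ i ∈ s, conj (c i) • v i, x⟫_𝕜 := by
    simp [sum_inner, inner_smul_left]
  have hnorm : ‖∑ i ∈ s, conj (c i) • v i‖ ^ 2 = ∑ i ∈ s, ‖c i‖ ^ 2 := by
    simpa using hv.orthogonalFamily.norm_sum (fun i => conj (c i)) s
  rw [hsum, ← hnorm, ← mul_pow]
  gcongr
  exact norm_inner_le_norm _ _

theorem Orthonormal.norm_tsum_mul_inner_sq_le {v : ι → E} (hv : Orthonormal 𝕜 v) {c : ι → 𝕜}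
    (hc : Summable fun i => ‖c i‖ ^ 2) (x : E) :
    ‖∑' i, c i * ⟪v i, x⟫_𝕜‖ ^ 2 ≤ (∑' i, ‖c i‖ ^ 2) * ‖x‖ ^ 2 := by
  by_cases hs : Summable fun i => c i * ⟪v i, x⟫_𝕜
  · refine le_of_tendsto' (hs.hasSum.norm.pow 2) fun s => ?_
    calc _ ≤ (∑ i ∈ s, ‖c i‖ ^ 2) * ‖x‖ ^ 2 := hv.norm_sum_mul_inner_sq_le c s x
      _ ≤ _ := by gcongr; exact hc.sum_le_tsum s fun i _ => sq_nonneg _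
  · rw [tsum_eq_zero_of_not_summable hs, norm_zero, sq, zero_mul]
    exact mul_nonneg (tsum_nonneg fun i => sq_nonneg _) (sq_nonneg _)

end Hilbert

namespace MeasureTheory.MemLp

variable {α 𝕜 : Type*} [MeasurableSpace α] {μ : Measure α} [RCLike 𝕜]

theorem inner_toLp_toLp {f g : α → 𝕜} (hf : MemLp f 2 μ) (hg : MemLp g 2 μ) :
    ⟪hf.toLp f, hg.toLp g⟫_𝕜 = ∫ a, conj (f a) * g a ∂μ := by
  rw [L2.inner_def]
  refine integral_congr_ae ?_
  filter_upwards [hf.coeFn_toLp, hg.coeFn_toLp] with a hfa hga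
  rw [hfa, hga, RCLike.inner_apply']

theorem norm_toLp_sq {f : α → 𝕜} (hf : MemLp f 2 μ) :
    ‖hf.toLp f‖ ^ 2 = ∫ a, ‖f a‖ ^ 2 ∂μ := by
  have hpt : ∀ a, conj (f a) * f a = ((‖f a‖ ^ 2 : ℝ) : 𝕜) := by simp [RCLike.conj_mul]
  rw [norm_sq_eq_re_inner (𝕜 := 𝕜), hf.inner_toLp_toLp, integral_congr_ae (ae_of_all _ hpt),
    integral_ofReal, RCLike.ofReal_re]

end MeasureTheory.MemLp

theorem tsum_subtype_le_card_mul {ι : Type*} {s : Set ι} {t : Finset ι} (hst : s ⊆ t)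
    {f : ι → ℝ} {C : ℝ} (hC : 0 ≤ C) (hf : ∀ i ∈ s, f i ≤ C) :
    ∑' i : s, f i ≤ t.card * C := by
  rw [tsum_subtype, tsum_eq_sum fun i hi => Set.indicator_of_notMem (fun h => hi (hst h)) _]
  calc ∑ i ∈ t, s.indicator f i ≤ ∑ _i ∈ t, C := Finset.sum_le_sum fun i _ => ?_
    _ = t.card * C := by rw [Finset.sum_const, nsmul_eq_mul]
  by_cases hi : i ∈ s
  · simpa [hi] using hf i hi
  · simpa [hi] using hC

theorem Int.card_Icc_ceil_floor_le {a b : ℝ} (hab : a ≤ b + 1) :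
    ((Finset.Icc ⌈a⌉ ⌊b⌋).card : ℝ) ≤ b - a + 1 := by
  rw [Int.card_Icc, ← Int.cast_natCast, Int.toNat_eq_max, Int.cast_max, Int.cast_zero]
  refine max_le ?_ (by linarith)
  push_cast
  linarith [Int.floor_le b, Int.le_ceil a]

theorem integral_Icc_exp_int_mul_pi_div {L : ℝ} (hL : 0 < L) (k : ℤ) :
    ∫ y in Set.Icc (-L) L, Complex.exp (Complex.I * ((k * π / L : ℝ) : ℂ) * y) =
      if k = 0 then ((2 * L : ℝ) : ℂ) else 0 := by
  split_ifs with hk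
  · simp [hk, hL.le, two_mul]
  · have hc : Complex.I * ((k * π / L : ℝ) : ℂ) ≠ 0 := by
      have : (k * π / L : ℝ) ≠ 0 := by have := pi_pos; positivity
      exact mul_ne_zero Complex.I_ne_zero (by exact_mod_cast this)
    rw [integral_Icc_eq_integral_Ioc, ← intervalIntegral.integral_of_le (by linarith),
      integral_exp_mul_complex hc, div_eq_zero_iff, sub_eq_zero]
    left
    refine Complex.exp_eq_exp_iff_exists_int.mpr ⟨k, ?_⟩
    have hL' : (L : ℂ) ≠ 0 := by exact_mod_cast hL.ne'
    push_cast
    field_simp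
    ring

abbrev window (h : ℝ) : Set ℝ := Set.Icc (-(1 / (2 * h))) (1 / (2 * h))

theorem memLp_planeWave (h : ℝ) (m : ℤ) :
    MemLp (fun y : ℝ => (√h : ℂ) * Complex.exp (Complex.I * vpt h m * y)) 2
      (volume.restrict (window h)) := by
  refine MemLp.of_bound (Continuous.aestronglyMeasurable (by fun_prop)) √h (ae_of_all _ fun y => ?_)
  simp [Complex.norm_exp, abs_of_nonneg (Real.sqrt_nonneg h)]

/-- `e_m(y) = √h e^{i v_m y}` as an element of `L²` of the window. -/
noncomputable def planeWave (h : ℝ) (m : ℤ) : Lp ℂ 2 (volume.restrict (window h)) :=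
  (memLp_planeWave h m).toLp _

theorem orthonormal_planeWave {h : ℝ} (hh : 0 < h) : Orthonormal ℂ (planeWave h) := by
  rw [orthonormal_iff_ite]
  intro m m'
  have hpt : ∀ y : ℝ, conj ((√h : ℂ) * Complex.exp (Complex.I * vpt h m * y)) *
      ((√h : ℂ) * Complex.exp (Complex.I * vpt h m' * y)) =
      h * Complex.exp (Complex.I * (((m' - m : ℤ) * π / (1 / (2 * h)) : ℝ) : ℂ) * y) := by
    intro y
    rw [map_mul, Complex.conj_ofReal, ← Complex.exp_conj, mul_mul_mul_comm, ← Complex.exp_add,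
      ← Complex.ofReal_mul, Real.mul_self_sqrt hh.le]
    congr 2
    simp only [map_mul, Complex.conj_I, Complex.conj_ofReal, vpt]
    push_cast
    field_simp
    ring
  rw [planeWave, planeWave, MemLp.inner_toLp_toLp, integral_congr_ae (ae_of_all _ hpt),
    integral_const_mul, integral_Icc_exp_int_mul_pi_div (by positivity)]
  simp only [sub_eq_zero, eq_comm (a := m')]
  split_ifs
  · have : (h : ℂ) ≠ 0 := by exact_mod_cast hh.ne'
    push_cast
    field_simp
  · rw [mul_zero]

noncomputable def potDiff (V : ℝ → ℝ) (x y : ℝ) : ℝ := V (x + y / 2) - V (x - y / 2)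

theorem measurable_potDiff {V : ℝ → ℝ} (hV : Measurable V) (x : ℝ) : Measurable (potDiff V x) :=
  (hV.comp (by fun_prop)).sub (hV.comp (by fun_prop))

theorem abs_potDiff_le {V : ℝ → ℝ} {c : ℝ} (hV : ∀ t, |V t| ≤ c) (x y : ℝ) :
    |potDiff V x y| ≤ 2 * c :=
  (abs_sub _ _).trans (by linarith [hV (x + y / 2), hV (x - y / 2)])

noncomputable def bdProfile (V : ℝ → ℝ) (x h : ℝ) (n : ℤ) (y : ℝ) : ℂ :=
  √h * potDiff V x y * ((Complex.exp (Complex.I * vpt h n * y) - 1) / vpt h n)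

theorem norm_exp_I_mul_sub_one_div_le (v y : ℝ) :
    ‖(Complex.exp (Complex.I * v * y) - 1) / v‖ ≤ |y| := by
  -- at `v = 0` the left side is `0`, by `x / 0 = 0`
  rcases eq_or_ne v 0 with rfl | hv
  · simp
  rw [norm_div, Complex.norm_real, div_le_iff₀ (norm_pos_iff.mpr hv), mul_assoc,
    ← Complex.ofReal_mul]
  calc _ ≤ ‖v * y‖ := Real.norm_exp_I_mul_ofReal_sub_one_le
    _ = |y| * ‖v‖ := by rw [norm_mul, Real.norm_eq_abs, Real.norm_eq_abs, mul_comm]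

theorem norm_bdProfile_le (V : ℝ → ℝ) (x h : ℝ) (n : ℤ) (y : ℝ) :
    ‖bdProfile V x h n y‖ ≤ √h * |y * potDiff V x y| := by
  rw [bdProfile, norm_mul, norm_mul, Complex.norm_real, Complex.norm_real, Real.norm_eq_abs,
    Real.norm_eq_abs, abs_of_nonneg (Real.sqrt_nonneg h), abs_mul, mul_assoc, mul_comm |y|]
  gcongr
  exact norm_exp_I_mul_sub_one_div_le _ _

theorem abs_le_of_mem_window {h y : ℝ} (hy : y ∈ window h) : |y| ≤ 1 / (2 * h) :=
  abs_le.mpr hy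

theorem memLp_bdProfile {V : ℝ → ℝ} (hVm : Measurable V) {c : ℝ} (hc : ∀ t, |V t| ≤ c)
    (x h : ℝ) (n : ℤ) : MemLp (bdProfile V x h n) 2 (volume.restrict (window h)) := by
  refine MemLp.of_bound ?_ (√h * (1 / (2 * h) * (2 * c))) ?_
  · have := measurable_potDiff hVm x
    exact Measurable.aestronglyMeasurable (by unfold bdProfile; fun_prop)
  · filter_upwards [ae_restrict_mem measurableSet_Icc] with y hy
    refine (norm_bdProfile_le V x h n y).trans ?_
    rw [abs_mul]
    have hy' := abs_le_of_mem_window hy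
    have hc0 : 0 ≤ c := (abs_nonneg _).trans (hc 0)
    gcongr
    exacts [(abs_nonneg y).trans hy', abs_potDiff_le hc x y]

theorem integrableOn_sq_mul_potDiff_sq {V : ℝ → ℝ} (hVm : Measurable V) {c : ℝ}
    (hc : ∀ t, |V t| ≤ c) (x h : ℝ) :
    IntegrableOn (fun y => y ^ 2 * potDiff V x y ^ 2) (window h) := by
  refine (continuous_pow 2).integrableOn_Icc.mul_bdd
    ((measurable_potDiff hVm x).pow_const 2).aestronglyMeasurable (c := (2 * c) ^ 2)
    (ae_of_all _ fun y => ?_)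
  rw [norm_pow, Real.norm_eq_abs]
  exact pow_le_pow_left₀ (abs_nonneg _) (abs_potDiff_le hc x y) 2

theorem norm_toLp_bdProfile_sq_le {V : ℝ → ℝ} {x h : ℝ} (hh : 0 ≤ h) {n : ℤ}
    (hF : MemLp (bdProfile V x h n) 2 (volume.restrict (window h)))
    (hK : IntegrableOn (fun y => y ^ 2 * potDiff V x y ^ 2) (window h)) :
    ‖hF.toLp _‖ ^ 2 ≤ h * ∫ y in window h, y ^ 2 * potDiff V x y ^ 2 := by
  rw [hF.norm_toLp_sq, ← integral_const_mul]
  refine integral_mono_of_nonneg (ae_of_all _ fun y => sq_nonneg _) (hK.const_mul h)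
    (ae_of_all _ fun y => ?_)
  calc ‖bdProfile V x h n y‖ ^ 2 ≤ (√h * |y * potDiff V x y|) ^ 2 := by
        gcongr; exact norm_bdProfile_le V x h n y
    _ = h * (y ^ 2 * potDiff V x y ^ 2) := by
        rw [mul_pow, Real.sq_sqrt hh, sq_abs, mul_pow]

theorem Bd_eq_I_mul_tsum_inner {V : ℝ → ℝ} {x h : ℝ} (hh : 0 ≤ h) (g : ℤ → ℂ) {n : ℤ}
    (hF : MemLp (bdProfile V x h n) 2 (volume.restrict (window h))) :
    Bd V x h g n = Complex.I * ∑' m, g m * ⟪planeWave h m, hF.toLp _⟫_ℂ := by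
  rw [Bd, mul_assoc, ← tsum_mul_left]
  congr 1
  refine tsum_congr fun m => ?_
  rw [planeWave, MemLp.inner_toLp_toLp, mul_left_comm, ← integral_const_mul]
  congr 1
  refine integral_congr_ae (ae_of_all _ fun y => ?_)
  dsimp only
  have hsplit : Complex.exp (Complex.I * ((vpt h n - vpt h m : ℝ) : ℂ) * y) =
      Complex.exp (Complex.I * vpt h n * y) * Complex.exp (-(Complex.I * vpt h m * y)) := by
    rw [← Complex.exp_add]; push_cast; ring_nf
  have hconj : conj ((√h : ℂ) * Complex.exp (Complex.I * vpt h m * y)) =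
      √h * Complex.exp (-(Complex.I * vpt h m * y)) := by
    simp [← Complex.exp_conj]
  have hsqrt : (√h : ℂ) * √h = h := by rw [← Complex.ofReal_mul, Real.mul_self_sqrt hh]
  rw [hsplit, hconj, bdProfile, potDiff, ← hsqrt]
  ring

theorem norm_Bd_sq_le {V : ℝ → ℝ} (hVm : Measurable V) {c : ℝ} (hc : ∀ t, |V t| ≤ c)
    (x : ℝ) {h : ℝ} (hh : 0 < h) {g : ℤ → ℂ} (hg : Summable fun m => ‖g m‖ ^ 2) (n : ℤ) :
    ‖Bd V x h g n‖ ^ 2 ≤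
      h * (∫ y in window h, y ^ 2 * potDiff V x y ^ 2) * ∑' m, ‖g m‖ ^ 2 := by
  have hF := memLp_bdProfile hVm hc x h n
  rw [Bd_eq_I_mul_tsum_inner hh.le g hF, norm_mul, Complex.norm_I, one_mul, mul_comm]
  calc _ ≤ (∑' m, ‖g m‖ ^ 2) * ‖hF.toLp _‖ ^ 2 :=
        (orthonormal_planeWave hh).norm_tsum_mul_inner_sq_le hg _
    _ ≤ _ := by
        gcongr
        exact norm_toLp_bdProfile_sq_le hh.le hF (integrableOn_sq_mul_potDiff_sq hVm hc x h)

theorem setOf_abs_vpt_le_one_subset {h : ℝ} (hh : 0 < h) :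
    {n : ℤ | |vpt h n| ≤ 1} ⊆ Finset.Icc ⌈(-(1 / (π * h)) - 1) / 2⌉ ⌊(1 / (π * h) - 1) / 2⌋ := by
  intro n (hn : |vpt h n| ≤ 1)
  have hπh : 0 < π * h := by positivity
  have hvpt : |vpt h n| = |2 * (n : ℝ) + 1| * (π * h) := by
    rw [vpt, mul_assoc, abs_mul, abs_of_pos hπh]
  rw [hvpt, ← le_div_iff₀ hπh, abs_le] at hn
  simp only [Finset.coe_Icc, Set.mem_Icc, Int.ceil_le, Int.le_floor]
  constructor <;> linarith

/-- Low-velocity part of the discrete singularity-free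
operator: summing over the indices `n` with `|(2n+1)πh| ≤ 1`,
`Σ_{|v_n|≤1} |(B_d g)_n|² ≤ (1/π + h) (∫_{−1/(2h)}^{1/(2h)} y²|D_V(y)|² dy) ‖g‖²_{ℓ²}`. -/
theorem stmt13 (V : ℝ → ℝ) (hVm : Measurable V) (hVb : ∃ c : ℝ, ∀ t : ℝ, |V t| ≤ c)
    (x h : ℝ) (hh : 0 < h) (g : ℤ → ℂ) (hg : Memℓp g 2) :
    ∑' n : {n : ℤ // |vpt h n| ≤ 1}, ‖Bd V x h g (n : ℤ)‖ ^ 2 ≤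
      (1 / π + h) *
        (∫ y in Set.Icc (-(1 / (2 * h))) (1 / (2 * h)),
          y ^ 2 * (V (x + y / 2) - V (x - y / 2)) ^ 2) *
        ∑' m : ℤ, ‖g m‖ ^ 2 := by
  obtain ⟨c, hc⟩ := hVb
  have hg2 : Summable fun m => ‖g m‖ ^ 2 := by
    simpa using hg.summable (by norm_num : 0 < (2 : ENNReal).toReal)
  set K := ∫ y in window h, y ^ 2 * potDiff V x y ^ 2
  set R := 1 / (π * h)
  have hK : 0 ≤ K := setIntegral_nonneg measurableSet_Icc fun y _ => by positivity
  calc ∑' n : {n : ℤ // |vpt h n| ≤ 1}, ‖Bd V x h g n‖ ^ 2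
      ≤ (Finset.Icc ⌈(-R - 1) / 2⌉ ⌊(R - 1) / 2⌋).card * (h * K * ∑' m, ‖g m‖ ^ 2) :=
        tsum_subtype_le_card_mul (setOf_abs_vpt_le_one_subset hh) (by positivity)
          fun n _ => norm_Bd_sq_le hVm hc x hh hg2 n
    _ ≤ (R + 1) * (h * K * ∑' m, ‖g m‖ ^ 2) := by
        gcongr
        have hR : 0 < R := by positivity
        linarith [Int.card_Icc_ceil_floor_le (a := (-R - 1) / 2) (b := (R - 1) / 2) (by linarith)]
    _ = (1 / π + h) * K * ∑' m, ‖g m‖ ^ 2 := by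
        have := pi_pos.ne'
        simp only [R]
        field_simp
end
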